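/- Let p ∈ ℕ with p ≥ 1 and ε₀ ∈ (0,1). Let φ₀ ∈ C₀^∞((−1,0)×S²) and define φ₁(s,ω) := −∂_sφ₀(s,ω) − φ₀(s,ω)·δ − (1/(2(p+1)))·(−∂_sφ₀(s,ω))^{p+1}·δ^{(1−ε₀)p}. For δ ∈ (0,1) define φ(1,x) := δ^{2−ε₀}φ₀((r−1)/δ, x/r) and ∂_tφ(1,x) := δ^{1−ε₀}φ₁((r−1)/δ, x/r) for x ∈ ℝ³∖{0}, r = |x| (extended by zero outside the annulus 1−δ < r < 1). Then there exists a constant C > 0 depending only on φ₀, p, ε₀ such that for all δ ∈ (0,1) and all x ∈ ℝ³∖{0}: |(∂_t + ∂_r)φ(1,x)| = |δ^{1−ε₀}(φ₁ + ∂_sφ₀)((r−1)/δ, x/r)| ≤ C·δ^{2−ε₀−max{0, 1−(1−ε₀)p}}. -/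

import Mathlib

/-! The defect `φ₁ + ∂_sφ₀ = -φ₀ δ - (-∂_sφ₀)^{p+1} δ^{(1-ε₀)p} / (2(p+1))` is a combination of
`φ₀` and `∂_sφ₀`, both bounded uniformly on `ℝ × S²` because `φ₀` is supported in `s ∈ [-1, 0]`.
After the prefactor `δ^{1-ε₀}`, its two terms carry the powers `δ^{2-ε₀}` and `δ^{(1-ε₀)(p+1)}`,
and each of these is at most `δ^{2-ε₀-max{0, 1-(1-ε₀)p}}` when `δ ≤ 1`. -/

noncomputable section

open scoped BigOperators

/-- Points ω of ℝ³ (with the Euclidean norm). -/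
abbrev Sp : Type := EuclideanSpace ℝ (Fin 3)

/-- Points (s, ω) ∈ ℝ × ℝ³ (the sphere variable ω is evaluated on ‖ω‖ = 1). -/
abbrev Spt : Type := ℝ × Sp

/-- The derivative ∂_s in the first argument. -/
def pds (f : Spt → ℝ) (q : Spt) : ℝ := fderiv ℝ f q (1, 0)

/-- The choice (A.1) of φ₁:
φ₁ = −∂_sφ₀ − φ₀·δ − (1/(2(p+1)))·(−∂_sφ₀)^{p+1}·δ^{(1−ε₀)p}. -/
def phi1 (p : ℕ) (ε₀ : ℝ) (φ₀ : Spt → ℝ) (δ : ℝ) (q : Spt) : ℝ :=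
  -pds φ₀ q - φ₀ q * δ
    - (1 / (2 * ((p : ℝ) + 1))) * (-pds φ₀ q) ^ (p + 1) * δ ^ ((1 - ε₀) * p)

open Set

theorem tsupport_subset_Icc_prod_univ {E β : Type*} [TopologicalSpace E] [Zero β]
    {f : ℝ × E → β} {a b : ℝ} (hf : ∀ s ω, s ∉ Ioo a b → f (s, ω) = 0) :
    tsupport f ⊆ Icc a b ×ˢ univ := by
  refine closure_minimal (fun q hq => ⟨Ioo_subset_Icc_self ?_, mem_univ _⟩)
    (isClosed_Icc.prod isClosed_univ)
  by_contra hs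
  exact hq (hf q.1 q.2 hs)

theorem tsupport_pds_subset (f : Spt → ℝ) : tsupport (pds f) ⊆ tsupport f :=
  closure_minimal
    (fun q hq => support_fderiv_subset ℝ fun h : fderiv ℝ f q = 0 => hq (by simp [pds, h]))
    (isClosed_tsupport f)

theorem continuous_pds {f : Spt → ℝ} (hf : ContDiff ℝ 1 f) : Continuous (pds f) :=
  (hf.continuous_fderiv one_ne_zero).clm_apply continuous_const

theorem exists_pos_bound_of_support_inter_subset {X F : Type*} [TopologicalSpace X]
    [NormedAddCommGroup F] {g : X → F} (hg : Continuous g) {S T : Set X} (hS : IsCompact S)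
    (hST : T ∩ Function.support g ⊆ S) : ∃ M > 0, ∀ q ∈ T, ‖g q‖ ≤ M := by
  obtain ⟨M, hM⟩ := hS.exists_bound_of_continuousOn hg.continuousOn
  refine ⟨max M 1, by positivity, fun q hq => ?_⟩
  by_cases hq0 : g q = 0
  · simp only [hq0, norm_zero]
    positivity
  · exact (hM q (hST ⟨hq, hq0⟩)).trans (le_max_left _ _)

theorem exists_pos_bound_on_sphere {g : Spt → ℝ} (hg : Continuous g)
    {a b : ℝ} (hsupp : tsupport g ⊆ Icc a b ×ˢ univ) :
    ∃ M > 0, ∀ s : ℝ, ∀ x : Sp, x ≠ 0 → |g (s, ‖x‖⁻¹ • x)| ≤ M := by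
  obtain ⟨M, hM, hbound⟩ := exists_pos_bound_of_support_inter_subset hg
    (isCompact_Icc.prod (isCompact_sphere (0 : Sp) 1))
    (T := univ ×ˢ Metric.sphere 0 1)
    (fun q ⟨⟨_, hω⟩, hq⟩ => ⟨(hsupp (subset_tsupport g hq)).1, hω⟩)
  refine ⟨M, hM, fun s x hx => hbound _ ⟨mem_univ s, ?_⟩⟩
  simpa using norm_smul_inv_norm (𝕜 := ℝ) hx

theorem rpow_mul_rpow_le_rpow {δ a b c : ℝ} (hδ0 : 0 < δ) (hδ1 : δ ≤ 1) (h : c ≤ a + b) :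
    δ ^ a * δ ^ b ≤ δ ^ c := by
  rw [← Real.rpow_add hδ0]
  exact Real.rpow_le_rpow_of_exponent_ge hδ0 hδ1 h

theorem phi1_add_pds (p : ℕ) (ε₀ : ℝ) (φ₀ : Spt → ℝ) (δ : ℝ) (q : Spt) :
    phi1 p ε₀ φ₀ δ q + pds φ₀ q
      = -(φ₀ q * δ) - (-pds φ₀ q) ^ (p + 1) / (2 * ((p : ℝ) + 1)) * δ ^ ((1 - ε₀) * p) := by
  simp only [phi1]
  ring

theorem abs_rpow_mul_phi1_add_pds_le (p : ℕ) (ε₀ : ℝ) (φ₀ : Spt → ℝ) {δ : ℝ}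
    (hδ0 : 0 < δ) (hδ1 : δ ≤ 1) {q : Spt} {N₀ N₁ : ℝ}
    (h₀ : |φ₀ q| ≤ N₀) (h₁ : |pds φ₀ q| ≤ N₁) :
    |δ ^ (1 - ε₀) * (phi1 p ε₀ φ₀ δ q + pds φ₀ q)|
      ≤ (N₀ + N₁ ^ (p + 1) / (2 * ((p : ℝ) + 1))) * δ ^ (2 - ε₀ - max 0 (1 - (1 - ε₀) * p)) := by
  set e := 2 - ε₀ - max 0 (1 - (1 - ε₀) * p)
  have hlin : δ ^ (1 - ε₀) * δ ≤ δ ^ e := by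
    simpa using rpow_mul_rpow_le_rpow (b := 1) hδ0 hδ1
      (by linarith [le_max_left 0 (1 - (1 - ε₀) * p)])
  have hpow : δ ^ (1 - ε₀) * δ ^ ((1 - ε₀) * p) ≤ δ ^ e :=
    rpow_mul_rpow_le_rpow hδ0 hδ1 (by linarith [le_max_right 0 (1 - (1 - ε₀) * p)])
  have hpow_abs : |(-pds φ₀ q) ^ (p + 1)| ≤ N₁ ^ (p + 1) := by
    rw [abs_pow, abs_neg]
    exact pow_le_pow_left₀ (abs_nonneg _) h₁ _
  have hpos : (0 : ℝ) < 2 * ((p : ℝ) + 1) := by positivity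
  rw [phi1_add_pds]
  calc _ = |φ₀ q * (δ ^ (1 - ε₀) * δ)
          + (-pds φ₀ q) ^ (p + 1) / (2 * ((p : ℝ) + 1)) * (δ ^ (1 - ε₀) * δ ^ ((1 - ε₀) * p))| := by
        rw [← abs_neg]
        ring_nf
    _ ≤ |φ₀ q| * (δ ^ (1 - ε₀) * δ)
          + |(-pds φ₀ q) ^ (p + 1)| / (2 * ((p : ℝ) + 1))
            * (δ ^ (1 - ε₀) * δ ^ ((1 - ε₀) * p)) := by
        refine (abs_add_le _ _).trans_eq ?_
        rw [abs_mul, abs_of_pos (by positivity : 0 < δ ^ (1 - ε₀) * δ), abs_mul,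
          abs_of_pos (by positivity : 0 < δ ^ (1 - ε₀) * δ ^ ((1 - ε₀) * p)), abs_div,
          abs_of_pos hpos]
    _ ≤ N₀ * δ ^ e + N₁ ^ (p + 1) / (2 * ((p : ℝ) + 1)) * δ ^ e := by
        gcongr
        · exact (abs_nonneg _).trans h₀
        · exact div_nonneg (pow_nonneg ((abs_nonneg _).trans h₁) _) hpos.le
    _ = (N₀ + N₁ ^ (p + 1) / (2 * ((p : ℝ) + 1))) * δ ^ e := by ring

theorem outgoing_constraint_first_order_general
    (p : ℕ) (ε₀ : ℝ)
    (φ₀ : Spt → ℝ) (hφ₀ : ContDiff ℝ (⊤ : ℕ∞) φ₀)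
    (hsupp : ∀ (s : ℝ) (ω : Sp), s ∉ Set.Ioo (-1 : ℝ) 0 → φ₀ (s, ω) = 0) :
    ∃ C > (0 : ℝ), ∀ δ ∈ Set.Ioo (0 : ℝ) 1, ∀ x : Sp, x ≠ 0 →
      |δ ^ (1 - ε₀) *
          (phi1 p ε₀ φ₀ δ ((‖x‖ - 1) / δ, ‖x‖⁻¹ • x)
            + pds φ₀ ((‖x‖ - 1) / δ, ‖x‖⁻¹ • x))|
        ≤ C * δ ^ (2 - ε₀ - max 0 (1 - (1 - ε₀) * p)) := by
  have htsupp := tsupport_subset_Icc_prod_univ hsupp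
  obtain ⟨N₀, hN₀, hφ₀_le⟩ := exists_pos_bound_on_sphere hφ₀.continuous htsupp
  obtain ⟨N₁, hN₁, hpds_le⟩ := exists_pos_bound_on_sphere
    (continuous_pds (hφ₀.of_le (by exact_mod_cast le_top))) ((tsupport_pds_subset φ₀).trans htsupp)
  refine ⟨N₀ + N₁ ^ (p + 1) / (2 * ((p : ℝ) + 1)), by positivity, ?_⟩
  rintro δ ⟨hδ0, hδ1⟩ x hx
  exact abs_rpow_mul_phi1_add_pds_le p ε₀ φ₀ hδ0 hδ1.le (hφ₀_le _ x hx) (hpds_le _ x hx)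

/-- Appendix A, first-order case (A.3): with the choice (A.1) of φ₁, the short pulse data
satisfy the outgoing constraint |(∂_t+∂_r)φ(1,x)| = |δ^{1−ε₀}(φ₁+∂_sφ₀)((r−1)/δ, x/r)|
≤ C·δ^{2−ε₀−max{0,1−(1−ε₀)p}}. -/
theorem outgoing_constraint_first_order
    (p : ℕ) (hp : 1 ≤ p) (ε₀ : ℝ) (hε : ε₀ ∈ Set.Ioo (0 : ℝ) 1)
    (φ₀ : Spt → ℝ) (hφ₀ : ContDiff ℝ (⊤ : ℕ∞) φ₀)
    (hsupp : ∀ (s : ℝ) (ω : Sp), s ∉ Set.Ioo (-1 : ℝ) 0 → φ₀ (s, ω) = 0) :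
    ∃ C > (0 : ℝ), ∀ δ ∈ Set.Ioo (0 : ℝ) 1, ∀ x : Sp, x ≠ 0 →
      |δ ^ (1 - ε₀) *
          (phi1 p ε₀ φ₀ δ ((‖x‖ - 1) / δ, ‖x‖⁻¹ • x)
            + pds φ₀ ((‖x‖ - 1) / δ, ‖x‖⁻¹ • x))|
        ≤ C * δ ^ (2 - ε₀ - max 0 (1 - (1 - ε₀) * p)) :=
  outgoing_constraint_first_order_general p ε₀ φ₀ hφ₀ hsupp
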